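/- arXiv:2507.22248 — 2 statements merged into one kernel-verified Lean document; each statement's English description precedes it below -/
import Mathlib

section
/- There exists a constant C > 0, independent of J, such that for all integers J ≥ 2 and all distinct i, j ∈ {0,...,J-1} with i + j < J - 1, Σ_{m=1}^{J-1} (cos²(mπ/J)/(1-cos²(mπ/J)))·(cos(mπ(i+0.5)/J) - cos(mπ(j+0.5)/J))² ≥ C·J·|i-j|. -/
/-!
Write `θₘ = mπ/J`. Expanding the square,
`(cos x - cos y)² = 2 sin²((y - x)/2) - cos (x + y) + (cos 2x + cos 2y)/2`, and for
`x = (i + ½)θₘ`, `y = (j + ½)θₘ` exactly one of `j - i`, `i + j + 1` is even, say `2r`; all the other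
frequencies are odd. Odd frequencies cancel in the `cot² θₘ`-weighted sum under `m ↦ J - m`. For the
even one, the Fejér kernel `sin² (rθ) / sin² θ = ∑_{l<r} ∑_{|k|≤l} cos 2kθ` together with
`∑ₘ cos 2kθₘ = -1` for `J ∤ k` gives `∑ₘ cot² θₘ sin² (rθₘ) = r(J - r) - J/2`. Hence the sum is
exactly `2r(J - r) - J` with `|i - j| ≤ 2r < J`, which is at least `J |i - j| / 6`.
-/

open Real Finset

lemma sin_mul_pi_div_ne_zero {J : ℕ} (hJ : J ≠ 0) {k : ℤ} (hk : ¬ (J : ℤ) ∣ k) :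
    sin (k * π / J) ≠ 0 := by
  rw [Ne, sin_eq_zero_iff]
  rintro ⟨n, hn⟩
  refine hk ⟨n, ?_⟩
  field_simp at hn
  exact_mod_cast hn.symm.trans (mul_comm _ _)

lemma sin_nat_mul_pi_div_ne_zero {J m : ℕ} (hm : m ∈ Icc 1 (J - 1)) : sin (m * π / J) ≠ 0 := by
  rw [mem_Icc] at hm
  exact_mod_cast sin_mul_pi_div_ne_zero (k := m) (by omega)
    fun h => absurd (Int.le_of_dvd (by omega) h) (by omega)

lemma sum_Icc_cos_two_mul_mul_pi_div {J : ℕ} (hJ : 0 < J) {k : ℤ} (hk : ¬ (J : ℤ) ∣ k) :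
    ∑ m ∈ Icc 1 (J - 1), cos (2 * k * (m * π / J)) = -1 := by
  have hrange : ∑ m ∈ range J, cos (2 * k * (m * π / J)) = 0 := by
    have h := sin_mul_sum_cos J (2 * k * π / J) 0
    have hJ' : (J : ℝ) ≠ 0 := by positivity
    rw [show (J : ℝ) * (2 * k * π / J) / 2 = k * π by field_simp, sin_int_mul_pi, zero_mul,
      show 2 * k * π / J / 2 = k * π / J by ring] at h
    rw [← (mul_eq_zero.mp h).resolve_left (sin_mul_pi_div_ne_zero hJ.ne' hk)]
    refine sum_congr rfl fun m _ => ?_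
    ring_nf
  rw [range_eq_Ico, sum_eq_sum_Ico_succ_bot hJ] at hrange
  rw [show Icc 1 (J - 1) = Ico 1 J by ext; simp only [mem_Icc, mem_Ico]; omega]
  simp only [Nat.cast_zero, zero_mul, zero_div, mul_zero, cos_zero] at hrange
  linarith

lemma sin_mul_sum_cos_two_mul (l : ℕ) (x : ℝ) :
    sin x * ∑ i ∈ range (2 * l + 1), cos (2 * ((i : ℝ) - l) * x) = sin ((2 * l + 1) * x) := by
  have h := sin_mul_sum_cos (2 * l + 1) (2 * x) (-(2 * l * x))
  push_cast at h
  rw [show 2 * x / 2 = x by ring, show (2 * l + 1 - 1) * (2 * x) / 2 + -(2 * l * x) = 0 by ring,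
    cos_zero, mul_one, show (2 * l + 1) * (2 * x) / 2 = (2 * l + 1) * x by ring] at h
  rw [← h]
  congr 1
  exact sum_congr rfl fun i _ => by ring_nf

lemma sin_sq_eq_sin_sq_mul_fejer (r : ℕ) (x : ℝ) :
    sin (r * x) ^ 2 =
      sin x ^ 2 * ∑ l ∈ range r, ∑ i ∈ range (2 * l + 1), cos (2 * ((i : ℝ) - l) * x) := by
  have h := sin_mul_sum_sin r (2 * x) x
  rw [show 2 * x / 2 = x by ring, show (r - 1) * (2 * x) / 2 + x = r * x by ring,
    show (r : ℝ) * (2 * x) / 2 = r * x by ring] at h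
  rw [sq, ← h, sq, mul_assoc]
  congr 1
  rw [mul_sum]
  refine sum_congr rfl fun l _ => ?_
  rw [sin_mul_sum_cos_two_mul]
  ring_nf

lemma cast_card_Icc_one_sub_one {J : ℕ} (hJ : 0 < J) : ((Icc 1 (J - 1)).card : ℝ) = J - 1 := by
  rw [Nat.card_Icc, Nat.add_sub_cancel, Nat.cast_pred hJ]

lemma sum_range_sub_two_mul_add_one (a : ℝ) (r : ℕ) :
    ∑ l ∈ range r, (a - (2 * l + 1)) = r * (a - r) := by
  induction r with
  | zero => simp
  | succ r ih => rw [sum_range_succ, ih]; push_cast; ring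

lemma sum_Icc_fejer {J r : ℕ} (hrJ : r < J) :
    ∑ m ∈ Icc 1 (J - 1), ∑ l ∈ range r, ∑ i ∈ range (2 * l + 1),
      cos (2 * ((i : ℝ) - l) * (m * π / J)) = r * (J - r) := by
  have hJ : 0 < J := by omega
  have inner : ∀ l ∈ range r, ∀ i ∈ range (2 * l + 1),
      ∑ m ∈ Icc 1 (J - 1), cos (2 * ((i : ℝ) - l) * (m * π / J)) =
        (if i = l then (J : ℝ) else 0) - 1 := by
    intro l hl i hi
    rw [mem_range] at hl hi
    split_ifs with hil
    · simp [hil, Nat.cast_pred hJ]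
    · have hk : ¬ (J : ℤ) ∣ ((i : ℤ) - l) := fun hdvd =>
        hil (by have := Int.eq_zero_of_abs_lt_dvd hdvd (by rw [abs_lt]; omega); omega)
      rw [zero_sub, ← sum_Icc_cos_two_mul_mul_pi_div hJ hk]
      push_cast
      rfl
  calc _ = ∑ l ∈ range r, ∑ i ∈ range (2 * l + 1), ∑ m ∈ Icc 1 (J - 1),
        cos (2 * ((i : ℝ) - l) * (m * π / J)) := by
        rw [sum_comm]; exact sum_congr rfl fun l _ => sum_comm
    _ = ∑ l ∈ range r, ((J : ℝ) - (2 * l + 1)) := by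
        refine sum_congr rfl fun l hl => ?_
        rw [sum_congr rfl (inner l hl), sum_sub_distrib, sum_ite_eq', if_pos (mem_range.mpr (by omega))]
        simp
    _ = r * (J - r) := sum_range_sub_two_mul_add_one _ _

lemma sum_Icc_sin_sq {J r : ℕ} (hr : 0 < r) (hrJ : r < J) :
    ∑ m ∈ Icc 1 (J - 1), sin (r * (m * π / J)) ^ 2 = J / 2 := by
  have hk : ¬ (J : ℤ) ∣ (r : ℤ) := fun h => absurd (Int.le_of_dvd (by omega) h) (by omega)
  have hcos := sum_Icc_cos_two_mul_mul_pi_div (by omega : 0 < J) hk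
  push_cast at hcos
  simp only [sin_sq_eq_half_sub, sum_sub_distrib, sum_const, nsmul_eq_mul, ← sum_div,
    ← mul_assoc, hcos, cast_card_Icc_one_sub_one (by omega : 0 < J)]
  ring

lemma sum_cot_sq_mul_sin_sq {J r : ℕ} (hr : 0 < r) (hrJ : r < J) :
    ∑ m ∈ Icc 1 (J - 1), cot (m * π / J) ^ 2 * sin (r * (m * π / J)) ^ 2 = r * (J - r) - J / 2 := by
  have pointwise : ∀ m ∈ Icc 1 (J - 1), cot (m * π / J) ^ 2 * sin (r * (m * π / J)) ^ 2 =
      ∑ l ∈ range r, ∑ i ∈ range (2 * l + 1), cos (2 * ((i : ℝ) - l) * (m * π / J)) -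
        sin (r * (m * π / J)) ^ 2 := by
    intro m hm
    have hsin := sin_nat_mul_pi_div_ne_zero hm
    rw [sin_sq_eq_sin_sq_mul_fejer, cot_eq_cos_div_sin]
    generalize ∑ l ∈ range r, ∑ i ∈ range (2 * l + 1), cos (2 * ((i : ℝ) - l) * (m * π / J)) = K
    field_simp
    linear_combination K * sin_sq_add_cos_sq (m * π / J)
  rw [sum_congr rfl pointwise, sum_sub_distrib, sum_Icc_fejer hrJ, sum_Icc_sin_sq hr hrJ]

lemma sum_cot_sq_mul_cos_odd (J : ℕ) {k : ℕ} (hk : Odd k) :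
    ∑ m ∈ Icc 1 (J - 1), cot (m * π / J) ^ 2 * cos (k * (m * π / J)) = 0 := by
  set f : ℕ → ℝ := fun m => cot (m * π / J) ^ 2 * cos (k * (m * π / J))
  have reflect : ∀ m ∈ Icc 1 (J - 1), f (J - m) = -f m := by
    intro m hm
    rw [mem_Icc] at hm
    have hJ : (J : ℝ) ≠ 0 := by norm_cast; omega
    have hangle : ((J - m : ℕ) : ℝ) * π / J = π - m * π / J := by
      rw [Nat.cast_sub (by omega)]; field_simp
    simp only [f, hangle, mul_sub, cos_nat_mul_pi_sub, hk.neg_one_pow, cot_eq_cos_div_sin,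
      cos_pi_sub, sin_pi_sub]
    ring
  have maps_to : ∀ m ∈ Icc 1 (J - 1), J - m ∈ Icc 1 (J - 1) := fun m hm => by
    rw [mem_Icc] at hm ⊢; omega
  have invol : ∀ m ∈ Icc 1 (J - 1), J - (J - m) = m := fun m hm => by rw [mem_Icc] at hm; omega
  have hsymm : ∑ m ∈ Icc 1 (J - 1), f m = ∑ m ∈ Icc 1 (J - 1), f (J - m) :=
    sum_nbij' (J - ·) (J - ·) maps_to maps_to invol invol fun m hm => by rw [invol m hm]
  rw [sum_congr rfl reflect, sum_neg_distrib] at hsymm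
  linarith

lemma cos_sub_cos_sq (x y : ℝ) :
    (cos x - cos y) ^ 2 = 2 * sin ((y - x) / 2) ^ 2 - cos (x + y) + (cos (2 * x) + cos (2 * y)) / 2 := by
  rw [sin_sq_eq_half_sub, show 2 * ((y - x) / 2) = y - x by ring, cos_sub, cos_add, cos_two_mul,
    cos_two_mul]
  ring

lemma sum_cot_sq_mul_sin_sq_sub_cos_odd {J r a b c : ℕ} (hr : 0 < r) (hrJ : r < J) (ha : Odd a)
    (hb : Odd b) (hc : Odd c) :
    ∑ m ∈ Icc 1 (J - 1), cot (m * π / J) ^ 2 * (2 * sin (r * (m * π / J)) ^ 2 - cos (a * (m * π / J))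
      + (cos (b * (m * π / J)) + cos (c * (m * π / J))) / 2) = (2 * r * (J - r) - J : ℝ) := by
  set θ : ℕ → ℝ := fun m => m * π / J
  rw [sum_congr rfl fun m _ => show cot (θ m) ^ 2 * (2 * sin (r * θ m) ^ 2 - cos (a * θ m)
      + (cos (b * θ m) + cos (c * θ m)) / 2) = 2 * (cot (θ m) ^ 2 * sin (r * θ m) ^ 2)
      - cot (θ m) ^ 2 * cos (a * θ m)
      + (cot (θ m) ^ 2 * cos (b * θ m) + cot (θ m) ^ 2 * cos (c * θ m)) / 2 by ring,
    sum_add_distrib, sum_sub_distrib, ← mul_sum, ← sum_div, sum_add_distrib,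
    sum_cot_sq_mul_sin_sq hr hrJ, sum_cot_sq_mul_cos_odd J ha, sum_cot_sq_mul_cos_odd J hb,
    sum_cot_sq_mul_cos_odd J hc]
  ring

lemma sum_cot_sq_mul_cos_sub_cos_sq {J i j : ℕ} (hij : i < j) (hJ : i + j + 1 < J) :
    ∃ r : ℕ, 0 < r ∧ j - i ≤ 2 * r ∧ 2 * r < J ∧
      ∑ m ∈ Icc 1 (J - 1), cot (m * π / J) ^ 2 *
        (cos ((i + 1 / 2) * (m * π / J)) - cos ((j + 1 / 2) * (m * π / J))) ^ 2 =
          (2 * r * (J - r) - J : ℝ) := by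
  rcases Nat.even_or_odd (j - i) with ⟨r, hr⟩ | hodd
  · refine ⟨r, by omega, by omega, by omega, ?_⟩
    have hj : (j : ℝ) = i + r + r := by exact_mod_cast (by omega : j = i + r + r)
    rw [← sum_cot_sq_mul_sin_sq_sub_cos_odd (a := i + j + 1) (b := 2 * i + 1) (c := 2 * j + 1)
      (by omega) (by omega) (by grind) (odd_two_mul_add_one i) (odd_two_mul_add_one j)]
    refine sum_congr rfl fun m _ => ?_
    rw [cos_sub_cos_sq]
    push_cast
    rw [hj]
    ring_nf
  · obtain ⟨r, hr⟩ : Even (i + j + 1) := by grind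
    refine ⟨r, by omega, by omega, by omega, ?_⟩
    have hj : (j : ℝ) = r + r - i - 1 := by
      have : ((i + j + 1 : ℕ) : ℝ) = r + r := by exact_mod_cast hr
      push_cast at this; linarith
    rw [← sum_cot_sq_mul_sin_sq_sub_cos_odd (a := j - i) (b := 2 * i + 1) (c := 2 * j + 1)
      (by omega) (by omega) hodd (odd_two_mul_add_one i) (odd_two_mul_add_one j)]
    refine sum_congr rfl fun m _ => ?_
    rw [← cos_neg ((i + 1 / 2) * _), cos_sub_cos_sq, mul_neg, cos_neg]
    push_cast [Nat.cast_sub hij.le]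
    rw [hj]
    ring_nf

lemma div_six_mul_le_two_mul_mul_sub_sub {J r d : ℝ} (hr : 1 ≤ r) (hrJ : 2 * r + 1 ≤ J)
    (hd : d ≤ 2 * r) : J * d / 6 ≤ 2 * r * (J - r) - J := by
  nlinarith [mul_nonneg (sub_nonneg.2 hr) (by linarith : 0 ≤ J - 1 - 2 * r)]

theorem variance_lower_bound :
    ∃ C : ℝ, 0 < C ∧ ∀ J : ℕ, 2 ≤ J → ∀ i j : ℕ, i ≤ J - 1 → j ≤ J - 1 → i ≠ j →
      i + j < J - 1 →
      ∑ m ∈ Finset.Icc 1 (J - 1),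
          (Real.cos ((m : ℝ) * π / J)) ^ 2 / (1 - (Real.cos ((m : ℝ) * π / J)) ^ 2) *
            (Real.cos ((m : ℝ) * π * ((i : ℝ) + 0.5) / J) -
              Real.cos ((m : ℝ) * π * ((j : ℝ) + 0.5) / J)) ^ 2 ≥
        C * J * |(i : ℝ) - (j : ℝ)| := by
  refine ⟨1 / 6, by norm_num, fun J _ i j hi hj hne hsum => ?_⟩
  have weight (x : ℝ) : cos x ^ 2 / (1 - cos x ^ 2) = cot x ^ 2 := by
    rw [← sin_sq, cot_eq_cos_div_sin, div_pow]
  have angle (m n : ℕ) : (m : ℝ) * π * (n + 0.5) / J = (n + 1 / 2) * (m * π / J) := by ring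
  simp only [weight, angle, ge_iff_le]
  wlog hij : i < j generalizing i j
  · simpa only [sub_sq_comm, abs_sub_comm] using this j i hj hi hne.symm (by omega) (by omega)
  obtain ⟨r, hr, hdr, hrJ, hS⟩ := sum_cot_sq_mul_cos_sub_cos_sq (J := J) hij (by omega)
  rw [hS, abs_sub_comm, abs_of_pos (sub_pos.2 (by exact_mod_cast hij)), ← Nat.cast_sub hij.le]
  have := div_six_mul_le_two_mul_mul_sub_sub (J := J) (r := r) (d := ((j - i : ℕ) : ℝ))
    (by exact_mod_cast hr) (by exact_mod_cast hrJ) (by exact_mod_cast hdr)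
  linarith
end

section
/- There exists a constant C > 0 such that for all integers J ≥ 2, Σ_{m=1}^{J-1} min(J²/m², (i-j)²) ≤ C·J·(i-j) for every pair of integers 0 ≤ j < i ≤ J-1. -/
open Real Finset

lemma aux_tail_sum (k : ℕ) (hk : 1 ≤ k) :
    ∀ N : ℕ, ∑ m ∈ Finset.Icc (k+1) N, (1:ℝ)/(m:ℝ)^2 ≤ 1/k - 1/(max k N) := by
  intro N
  induction N with
  | zero =>
    rw [Finset.Icc_eq_empty (by omega)]
    simp
  | succ N ih =>
    rcases le_or_gt (N+1) k with h | h
    · rw [Finset.Icc_eq_empty (by omega)]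
      rw [max_eq_left h]
      simp
    · have hkN : k ≤ N := by omega
      have hN1 : 1 ≤ N := le_trans hk hkN
      rw [Finset.sum_Icc_succ_top (by omega)]
      rw [max_eq_right (by omega)]
      rw [max_eq_right hkN] at ih
      have hNpos : (0:ℝ) < N := by exact_mod_cast hN1
      have key : (1:ℝ)/((N:ℝ)+1)^2 ≤ 1/N - 1/(N+1) := by
        rw [div_sub_div _ _ (ne_of_gt hNpos) (by positivity)]
        rw [div_le_div_iff₀ (by positivity) (by positivity)]
        ring_nf
        nlinarith
      push_cast
      linarith

theorem sum_min_bound :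
    ∃ C : ℝ, 0 < C ∧ ∀ J : ℕ, 2 ≤ J → ∀ i j : ℕ, j < i → i ≤ J - 1 →
      ∑ m ∈ Finset.Icc 1 (J - 1),
          min ((J : ℝ) ^ 2 / (m : ℝ) ^ 2) (((i : ℝ) - (j : ℝ)) ^ 2) ≤
        C * J * ((i : ℝ) - (j : ℝ)) := by
  refine ⟨3, by norm_num, ?_⟩
  intro J hJ i j hji hiJ
  set d : ℝ := (i:ℝ) - (j:ℝ) with hdd
  have hd1 : 1 ≤ d := by
    have : (j:ℝ) + 1 ≤ i := by exact_mod_cast hji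
    simp only [hdd]; linarith
  have hd0 : (0:ℝ) < d := lt_of_lt_of_le one_pos hd1
  have hJ0 : (0:ℝ) < J := by
    have : (2:ℝ) ≤ J := by exact_mod_cast hJ
    linarith
  have hdJ : d ≤ J := by
    have h' : (i:ℝ) ≤ ((J-1:ℕ):ℝ) := Nat.cast_le.mpr hiJ
    have h'' : ((J-1:ℕ):ℝ) = (J:ℝ) - 1 := by
      have h1 : 1 ≤ J := le_trans one_le_two hJ
      push_cast [Nat.cast_sub h1]
      ring
    have hj0 : (0:ℝ) ≤ j := Nat.cast_nonneg j
    simp only [hdd]; linarith [h''.symm ▸ h']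
  set k : ℕ := ⌈(J:ℝ)/d⌉₊ with hkdef
  have hk1 : 1 ≤ k := Nat.one_le_ceil_iff.mpr (by positivity)
  have hkle : (J:ℝ)/d ≤ k := Nat.le_ceil _
  have hklt : (k:ℝ) < (J:ℝ)/d + 1 := Nat.ceil_lt_add_one (by positivity)
  clear hkdef hdd
  clear_value k d
  have hbound : ∀ m ∈ Finset.Icc 1 (J-1),
      min ((J:ℝ)^2/(m:ℝ)^2) (d^2) ≤ if m ≤ k then d^2 else (J:ℝ)^2/(m:ℝ)^2 := by
    intro m _
    split
    · exact min_le_right _ _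
    · exact min_le_left _ _
  have step1 := Finset.sum_le_sum hbound
  rw [Finset.sum_ite] at step1
  -- part 1
  have hpart1 : ∑ _m ∈ (Finset.Icc 1 (J-1)).filter (fun m => m ≤ k), d^2
      ≤ 2 * J * d := by
    rw [Finset.sum_const, nsmul_eq_mul]
    have hcard : ((Finset.Icc 1 (J-1)).filter (fun m => m ≤ k)).card ≤ k := by
      have hsub : (Finset.Icc 1 (J-1)).filter (fun m => m ≤ k) ⊆ Finset.Icc 1 k := by
        intro m hm
        simp only [Finset.mem_filter, Finset.mem_Icc] at hm ⊢
        omega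
      calc _ ≤ (Finset.Icc 1 k).card := Finset.card_le_card hsub
        _ = k := by rw [Nat.card_Icc]; omega
    have hcard' : (((Finset.Icc 1 (J-1)).filter (fun m => m ≤ k)).card : ℝ) ≤ (k:ℝ) :=
      Nat.cast_le.mpr hcard
    have hkd : (k:ℝ) * d^2 ≤ 2 * J * d := by
      have h1 : (k:ℝ) * d^2 < ((J:ℝ)/d + 1) * d^2 := by
        apply mul_lt_mul_of_pos_right hklt (by positivity)
      have h2 : ((J:ℝ)/d + 1) * d^2 = (J:ℝ)*d + d^2 := by
        field_simp
      have hd2 : d^2 ≤ (J:ℝ)*d := by nlinarith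
      linarith
    calc (((Finset.Icc 1 (J-1)).filter (fun m => m ≤ k)).card : ℝ) * d^2
        ≤ (k:ℝ) * d^2 := by nlinarith [sq_nonneg d]
      _ ≤ 2 * J * d := hkd
  -- part 2
  have hpart2 : ∑ m ∈ (Finset.Icc 1 (J-1)).filter (fun m => ¬ m ≤ k), (J:ℝ)^2/(m:ℝ)^2
      ≤ J * d := by
    have hsub : (Finset.Icc 1 (J-1)).filter (fun m => ¬ m ≤ k) ⊆ Finset.Icc (k+1) (J-1) := by
      intro m hm
      simp only [Finset.mem_filter, Finset.mem_Icc] at hm ⊢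
      omega
    have h1 : ∑ m ∈ (Finset.Icc 1 (J-1)).filter (fun m => ¬ m ≤ k), (J:ℝ)^2/(m:ℝ)^2
        ≤ ∑ m ∈ Finset.Icc (k+1) (J-1), (J:ℝ)^2/(m:ℝ)^2 :=
      Finset.sum_le_sum_of_subset_of_nonneg hsub (fun m _ _ => by positivity)
    have h2 : ∑ m ∈ Finset.Icc (k+1) (J-1), (J:ℝ)^2/(m:ℝ)^2
        = (J:ℝ)^2 * ∑ m ∈ Finset.Icc (k+1) (J-1), (1:ℝ)/(m:ℝ)^2 := by
      rw [Finset.mul_sum]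
      apply Finset.sum_congr rfl
      intro m _
      ring
    have htail : ∑ m ∈ Finset.Icc (k+1) (J-1), (1:ℝ)/(m:ℝ)^2 ≤ 1/(k:ℝ) := by
      have := aux_tail_sum k hk1 (J-1)
      have hmax : (0:ℝ) < (max k (J-1) : ℕ) := by
        have : 1 ≤ max k (J-1) := le_trans hk1 (le_max_left _ _)
        exact_mod_cast this
      have : (0:ℝ) ≤ 1/((max k (J-1) : ℕ):ℝ) := by positivity
      linarith [aux_tail_sum k hk1 (J-1)]
    have hk0 : (0:ℝ) < k := by exact_mod_cast hk1
    have hinv : 1/(k:ℝ) ≤ d/(J:ℝ) := by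
      rw [div_le_div_iff₀ hk0 hJ0]
      have := (div_le_iff₀ hd0).mp hkle
      linarith
    calc ∑ m ∈ (Finset.Icc 1 (J-1)).filter (fun m => ¬ m ≤ k), (J:ℝ)^2/(m:ℝ)^2
        ≤ (J:ℝ)^2 * ∑ m ∈ Finset.Icc (k+1) (J-1), (1:ℝ)/(m:ℝ)^2 := h2 ▸ h1
      _ ≤ (J:ℝ)^2 * (1/(k:ℝ)) := by nlinarith
      _ ≤ (J:ℝ)^2 * (d/(J:ℝ)) := by nlinarith
      _ = J * d := by field_simp
  calc ∑ m ∈ Finset.Icc 1 (J-1), min ((J:ℝ)^2/(m:ℝ)^2) (d^2)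
      ≤ _ := step1
    _ ≤ 2 * J * d + J * d := add_le_add hpart1 hpart2
    _ = 3 * J * d := by ring
end
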